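/- arXiv:1806.02865 — 2 statements merged into one kernel-verified Lean document; each statement's English description precedes it below -/
import Mathlib

section
/- Let (M_i, X_i, Y_i), i = 1, 2, …, be i.i.d. copies of (M, X, Y), where M ∈ {0,1}, M and Y are conditionally independent given X, and the propensity score π(X) = P(M = 1 | X) satisfies π(X) ≥ 2c > 0 almost surely. Fix a measurable f : 𝒳 → ℝ such that 0 ≤ L(y, f(x)) ≤ B for all (x, y). Let π̂_n : 𝒳 → [c', 1] (c' > 0) be a sequence of (possibly data-dependent) measurable random functions with sup_{x ∈ 𝒳} |π̂_n(x) − π(x)| → 0 in probability. Then the weighted empirical risk (1/n) Σ_{i=1}^n M_i L(Y_i, f(X_i)) / π̂_n(X_i) converges in probability to the risk R_{L,P}(f) = E[L(Y, f(X))]. -/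
/-!
Replacing `π̂ₙ` by the true propensity `π` turns the estimator into the empirical mean of the
i.i.d. bounded variables `Mᵢ L(Yᵢ, f(Xᵢ)) / π(Xᵢ)`, which converges by the strong law. Its mean is
the risk because, under MAR, `E[M g(X, Y)] = E[π(X) g(X, Y)]` for every measurable `g`: the laws
of `(X, Y)` weighted by `M` and by `E[M | X]` agree on rectangles `S × T`, which is exactly the
conditional independence of `M` and `Y` given `X`. Finally, each substituted term moves by at most
`B / (c' · 2c) · sup_x |π̂ₙ(x) - π(x)|`, which tends to `0` in probability.
-/

open MeasureTheory ProbabilityTheory Filter Finset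

theorem MeasureTheory.TendstoInMeasure.of_dist_le_mul {α ι E : Type*} [MeasurableSpace α]
    {μ : Measure α} {l : Filter ι} [PseudoMetricSpace E] {f g : ι → α → E} {h : α → E}
    {s : ι → α → ℝ} {K : ℝ}
    (hg : TendstoInMeasure μ g l h) (hs : TendstoInMeasure μ s l fun _ => 0)
    (hfg : ∀ i x, dist (f i x) (g i x) ≤ K * s i x) : TendstoInMeasure μ f l h := by
  rw [tendstoInMeasure_iff_dist] at hg hs ⊢
  intro ε hε
  set δ := ε / (2 * (|K| + 1))
  have hsub : ∀ i, {x | ε ≤ dist (f i x) (h x)} ⊆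
      {x | δ ≤ dist (s i x) 0} ∪ {x | ε / 2 ≤ dist (g i x) (h x)} := by
    intro i x hx
    by_contra hcon
    simp only [Set.mem_union, Set.mem_ofPred_eq, not_or, not_le, Real.dist_eq, sub_zero] at hx hcon
    obtain ⟨hsδ, hgh⟩ := hcon
    have hKs : K * s i x ≤ |K| * δ :=
      (le_abs_self _).trans (by rw [abs_mul]; gcongr)
    have hδ : |K| * δ < ε / 2 := by
      rw [mul_div_assoc', div_lt_div_iff₀ (by positivity) two_pos]
      nlinarith [abs_nonneg K]
    linarith [dist_triangle (f i x) (g i x) (h x), hfg i x]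
  refine tendsto_of_tendsto_of_tendsto_of_le_of_le tendsto_const_nhds
    (by simpa using (hs δ (by positivity)).add (hg _ (half_pos hε))) (fun _ => zero_le)
    fun i => (measure_mono (hsub i)).trans (measure_union_le _ _)

theorem dist_inv_mul_sum_le {n : ℕ} {a b : ℕ → ℝ} {K : ℝ} (h : ∀ i, dist (a i) (b i) ≤ K) :
    dist ((n : ℝ)⁻¹ * ∑ i ∈ range n, a i) ((n : ℝ)⁻¹ * ∑ i ∈ range n, b i) ≤ K := by
  have hK : 0 ≤ K := dist_nonneg.trans (h 0)
  rw [Real.dist_eq, ← mul_sub, ← sum_sub_distrib, abs_mul, abs_inv, Nat.abs_cast]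
  calc (n : ℝ)⁻¹ * |∑ i ∈ range n, (a i - b i)| ≤ (n : ℝ)⁻¹ * (n * K) := by
        gcongr
        simpa using abs_sum_le_sum_abs (fun i => a i - b i) (range n) |>.trans
          (sum_le_card_nsmul _ _ K fun i _ => h i)
    _ ≤ K := by
        rcases n.eq_zero_or_pos with rfl | hn
        · simpa using hK
        · rw [inv_mul_cancel_left₀ (by positivity)]

theorem abs_div_sub_div_le {l B p q a b s : ℝ} (hl : l ∈ Set.Icc 0 B) (ha : 0 < a)
    (hb : 0 < b) (hap : a ≤ p) (hbq : b ≤ q) (hs : |p - q| ≤ s) :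
    |l / p - l / q| ≤ B / (a * b) * s := by
  have hp : 0 < p := ha.trans_le hap
  have hq : 0 < q := hb.trans_le hbq
  rw [show l / p - l / q = l * (q - p) / (p * q) by field_simp, abs_div,
    abs_of_pos (mul_pos hp hq), abs_mul, abs_of_nonneg hl.1, abs_sub_comm, div_mul_eq_mul_div]
  have hB : 0 ≤ B := hl.1.trans hl.2
  have : 0 ≤ s := (abs_nonneg _).trans hs
  gcongr
  exact hl.2

theorem tendstoInMeasure_inv_mul_sum_comp {Ω β : Type*} [MeasurableSpace Ω] [MeasurableSpace β]
    {μ : Measure Ω} [IsProbabilityMeasure μ] {Z : ℕ → Ω → β} (hindep : iIndepFun Z μ)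
    (hident : ∀ i, IdentDistrib (Z i) (Z 0) μ μ) {G : β → ℝ} (hG : Measurable G)
    (hint : Integrable (fun ω => G (Z 0 ω)) μ) :
    TendstoInMeasure μ (fun (n : ℕ) ω => (n : ℝ)⁻¹ * ∑ i ∈ range n, G (Z i ω)) atTop
      fun _ => ∫ ω, G (Z 0 ω) ∂μ := by
  have hmeas : ∀ i, AEMeasurable (fun ω => G (Z i ω)) μ :=
    fun i => hG.comp_aemeasurable (hident i).aemeasurable_fst
  refine tendstoInMeasure_of_tendsto_ae (fun n => ?_) ?_
  · exact ((Finset.aemeasurable_fun_sum _ fun i _ => hmeas i).const_mul _).aestronglyMeasurable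
  · simpa using strong_law_ae (fun i ω => G (Z i ω)) hint
      (fun i j hij => (hindep.indepFun hij).comp hG hG) fun i => (hident i).comp hG

section MissingAtRandom

variable {Ω β 𝒳 𝒴 : Type*} {m mΩ : MeasurableSpace Ω} [MeasurableSpace β] [MeasurableSpace 𝒳]
  [MeasurableSpace 𝒴] {μ : Measure Ω}

theorem integral_map_withDensity_ofReal {h : Ω → ℝ} (hh : AEMeasurable h μ) (h0 : 0 ≤ᵐ[μ] h)
    {Z : Ω → β} (hZ : Measurable Z) {g : β → ℝ} (hg : Measurable g) :
    ∫ p, g p ∂(μ.withDensity fun ω => ENNReal.ofReal (h ω)).map Z = ∫ ω, h ω * g (Z ω) ∂μ := by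
  rw [integral_map hZ.aemeasurable hg.aestronglyMeasurable]
  unfold ENNReal.ofReal
  rw [integral_withDensity_eq_integral_smul₀ hh.real_toNNReal]
  refine integral_congr_ae ?_
  filter_upwards [h0] with ω hω
  simp [NNReal.smul_def, Real.coe_toNNReal _ hω]

theorem map_withDensity_ofReal_eq_of_setIntegral_eq {X : Ω → 𝒳} {Y : Ω → 𝒴} (hX : Measurable X)
    (hY : Measurable Y) {h₁ h₂ : Ω → ℝ} (hi₁ : Integrable h₁ μ) (hi₂ : Integrable h₂ μ)
    (h₁0 : 0 ≤ᵐ[μ] h₁) (h₂0 : 0 ≤ᵐ[μ] h₂)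
    (heq : ∀ S T, MeasurableSet S → MeasurableSet T →
      ∫ ω in X ⁻¹' S ∩ Y ⁻¹' T, h₁ ω ∂μ = ∫ ω in X ⁻¹' S ∩ Y ⁻¹' T, h₂ ω ∂μ) :
    (μ.withDensity fun ω => ENNReal.ofReal (h₁ ω)).map (fun ω => (X ω, Y ω)) =
      (μ.withDensity fun ω => ENNReal.ofReal (h₂ ω)).map (fun ω => (X ω, Y ω)) := by
  have := isFiniteMeasure_withDensity_ofReal hi₁.2
  have hrect : ∀ {h : Ω → ℝ}, Integrable h μ → 0 ≤ᵐ[μ] h → ∀ {S : Set 𝒳} {T : Set 𝒴},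
      MeasurableSet S → MeasurableSet T →
      (μ.withDensity fun ω => ENNReal.ofReal (h ω)).map (fun ω => (X ω, Y ω)) (S ×ˢ T) =
        ENNReal.ofReal (∫ ω in X ⁻¹' S ∩ Y ⁻¹' T, h ω ∂μ) := by
    intro h hi h0 S T hS hT
    rw [Measure.map_apply (hX.prodMk hY) (hS.prod hT), Set.mk_preimage_prod,
      withDensity_apply _ ((hX hS).inter (hY hT)),
      ofReal_integral_eq_lintegral_ofReal hi.integrableOn (ae_restrict_of_ae h0)]
  exact Measure.ext_prod fun hS hT => by
    rw [hrect hi₁ h₁0 hS hT, hrect hi₂ h₂0 hS hT, heq _ _ hS hT]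

variable [StandardBorelSpace Ω] [IsFiniteMeasure μ]

theorem setIntegral_inter_preimage_eq_condExp_of_condIndepFun (hm : m ≤ mΩ) {M : Ω → ℝ}
    {Y : Ω → 𝒴} (hM : Measurable M) (hM01 : ∀ ω, M ω = 0 ∨ M ω = 1) (hY : Measurable Y)
    (hMY : CondIndepFun m hm M Y μ) {U : Set Ω} (hU : MeasurableSet[m] U) {T : Set 𝒴}
    (hT : MeasurableSet T) :
    ∫ ω in U ∩ Y ⁻¹' T, M ω ∂μ = ∫ ω in U ∩ Y ⁻¹' T, (μ[M | m]) ω ∂μ := by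
  set A := M ⁻¹' {1}
  set V := Y ⁻¹' T
  have hA : MeasurableSet A := hM (measurableSet_singleton 1)
  have hV : MeasurableSet V := hY hT
  have hMA : A.indicator (fun _ => (1 : ℝ)) = M := by
    funext ω
    rcases hM01 ω with h | h <;> simp [A, h]
  have hCI := (condIndepFun_iff_condExp_inter_preimage_eq_mul (hm' := hm) hM hY).1 hMY {1} T
    (measurableSet_singleton 1) hT
  rw [hMA] at hCI
  have hVind : μ[M | m] * V.indicator (fun _ => (1 : ℝ)) = V.indicator μ[M | m] := by
    funext ω
    by_cases h : ω ∈ V <;> simp [h]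
  have hpull : μ[μ[M | m] * V.indicator (fun _ => (1 : ℝ)) | m] =ᵐ[μ]
      μ[M | m] * μ⟦V | m⟧ :=
    condExp_mul_of_stronglyMeasurable_left stronglyMeasurable_condExp
      (hVind ▸ integrable_condExp.indicator hV) ((integrable_const 1).indicator hV)
  calc ∫ ω in U ∩ V, M ω ∂μ = ∫ ω in U, (A ∩ V).indicator (fun _ => (1 : ℝ)) ω ∂μ := by
        rw [← setIntegral_indicator hV, ← hMA, Set.indicator_indicator, Set.inter_comm]
    _ = ∫ ω in U, (μ⟦A ∩ V | m⟧) ω ∂μ :=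
        (setIntegral_condExp hm ((integrable_const 1).indicator (hA.inter hV)) hU).symm
    _ = ∫ ω in U, (μ[M | m] * μ[V.indicator (fun _ => (1 : ℝ)) | m]) ω ∂μ :=
        setIntegral_congr_ae (hm U hU) (hCI.mono fun ω hω _ => hω)
    _ = ∫ ω in U, (μ[μ[M | m] * V.indicator (fun _ => (1 : ℝ)) | m]) ω ∂μ :=
        setIntegral_congr_ae (hm U hU) (hpull.mono fun ω hω _ => hω.symm)
    _ = ∫ ω in U, (μ[M | m] * V.indicator (fun _ => (1 : ℝ))) ω ∂μ :=
        setIntegral_condExp hm (hVind ▸ integrable_condExp.indicator hV) hU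
    _ = ∫ ω in U ∩ V, (μ[M | m]) ω ∂μ := by
        rw [hVind, setIntegral_indicator hV]

theorem integral_mul_comp_eq_condExp_mul_of_condIndepFun (hm : m ≤ mΩ) {M : Ω → ℝ}
    {X : Ω → 𝒳} {Y : Ω → 𝒴} (hM : Measurable M) (hM01 : ∀ ω, M ω = 0 ∨ M ω = 1)
    (hX : Measurable[m] X) (hY : Measurable Y) (hMY : CondIndepFun m hm M Y μ)
    {g : 𝒳 × 𝒴 → ℝ} (hg : Measurable g) :
    ∫ ω, M ω * g (X ω, Y ω) ∂μ = ∫ ω, (μ[M | m]) ω * g (X ω, Y ω) ∂μ := by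
  have hM0 : 0 ≤ᵐ[μ] M := .of_forall fun ω => by rcases hM01 ω with h | h <;> simp [h]
  have hMi : Integrable M μ := .of_bound hM.aestronglyMeasurable 1 (.of_forall fun ω => by
    rcases hM01 ω with h | h <;> simp [h])
  have hXY := (hX.mono hm le_rfl).prodMk hY
  rw [← integral_map_withDensity_ofReal hM.aemeasurable hM0 hXY hg,
    ← integral_map_withDensity_ofReal integrable_condExp.aemeasurable (condExp_nonneg hM0) hXY hg,
    map_withDensity_ofReal_eq_of_setIntegral_eq (hX.mono hm le_rfl) hY hMi integrable_condExp
      hM0 (condExp_nonneg hM0) fun S T hS hT =>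
        setIntegral_inter_preimage_eq_condExp_of_condIndepFun hm hM hM01 hY hMY (hX hS) hT]

theorem integral_mul_div_propensity_eq_of_condIndepFun (hm : m ≤ mΩ) {M : Ω → ℝ}
    {X : Ω → 𝒳} {Y : Ω → 𝒴} (hM : Measurable M) (hM01 : ∀ ω, M ω = 0 ∨ M ω = 1)
    (hX : Measurable[m] X) (hY : Measurable Y) (hMY : CondIndepFun m hm M Y μ)
    {π : 𝒳 → ℝ} (hπ : Measurable π) (hπ0 : ∀ x, π x ≠ 0)
    (hπX : (fun ω => π (X ω)) =ᵐ[μ] μ[M | m]) {ℓ : 𝒳 × 𝒴 → ℝ} (hℓ : Measurable ℓ) :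
    ∫ ω, M ω * ℓ (X ω, Y ω) / π (X ω) ∂μ = ∫ ω, ℓ (X ω, Y ω) ∂μ := by
  simp only [mul_div_assoc]
  rw [integral_mul_comp_eq_condExp_mul_of_condIndepFun hm hM hM01 hX hY hMY
    (g := fun p => ℓ p / π p.1) (hℓ.div (hπ.comp measurable_fst))]
  refine integral_congr_ae (hπX.mono fun ω hω => ?_)
  simp only [← hω]
  exact mul_div_cancel₀ _ (hπ0 _)

end MissingAtRandom

theorem stmt_1_general
    {Ω 𝒳 : Type*} [MeasurableSpace Ω] [StandardBorelSpace Ω] [MeasurableSpace 𝒳]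
    (μ : Measure Ω) [IsProbabilityMeasure μ]
    (M : ℕ → Ω → ℝ) (X : ℕ → Ω → 𝒳) (Y : ℕ → Ω → ℝ)
    (hM : ∀ i, Measurable (M i)) (hX : ∀ i, Measurable (X i)) (hY : ∀ i, Measurable (Y i))
    (hM01 : ∀ i ω, M i ω = 0 ∨ M i ω = 1)
    -- the triples (Mᵢ, Xᵢ, Yᵢ) are i.i.d. copies of the base triple (M₀, X₀, Y₀)
    (hIndep : iIndepFun (fun i ω => (M i ω, X i ω, Y i ω)) μ)
    (hIdent : ∀ i, IdentDistrib (fun ω => (M i ω, X i ω, Y i ω))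
      (fun ω => (M 0 ω, X 0 ω, Y 0 ω)) μ μ)
    -- MAR: M and Y are conditionally independent given X
    (hMAR : CondIndepFun (MeasurableSpace.comap (X 0) inferInstance) (hX 0).comap_le
      (M 0) (Y 0) μ)
    -- propensity score: π(X) = P(M = 1 | X) = E[M | X], with π(x) ≥ 2c > 0
    (π : 𝒳 → ℝ) (hπ : Measurable π)
    (hπX : (fun ω => π (X 0 ω)) =ᵐ[μ] μ[M 0 | MeasurableSpace.comap (X 0) inferInstance])
    (c : ℝ) (hc : 0 < c) (hπrange : ∀ x, π x ∈ Set.Icc (2 * c) 1)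
    -- the loss and the fixed predictor, with 0 ≤ L(y, f(x)) ≤ B
    (L : ℝ → ℝ → ℝ) (hL : Measurable (Function.uncurry L))
    (f : 𝒳 → ℝ) (hf : Measurable f)
    (B : ℝ) (hLf : ∀ (x : 𝒳) (y : ℝ), L y (f x) ∈ Set.Icc 0 B)
    -- the (possibly data-dependent) propensity estimators π̂ₙ : Ω → 𝒳 → [c', 1]
    (c' : ℝ) (hc' : 0 < c')
    (πhat : ℕ → Ω → 𝒳 → ℝ)
    (hπhatRange : ∀ n ω x, πhat n ω x ∈ Set.Icc c' 1)
    -- uniform consistency of π̂ₙ, in probability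
    (hπhatConv : TendstoInMeasure μ (fun n ω => ⨆ x : 𝒳, |πhat n ω x - π x|)
      Filter.atTop (fun _ => (0 : ℝ))) :
    TendstoInMeasure μ
      (fun (n : ℕ) ω => (n : ℝ)⁻¹ * ∑ i ∈ Finset.range n,
        M i ω * L (Y i ω) (f (X i ω)) / πhat n ω (X i ω))
      Filter.atTop
      (fun _ => ∫ ω, L (Y 0 ω) (f (X 0 ω)) ∂μ) := by
  have h2c : 0 < 2 * c := by linarith
  have hπpos : ∀ x, 0 < π x := fun x => h2c.trans_le (hπrange x).1
  have hML : ∀ i ω, M i ω * L (Y i ω) (f (X i ω)) ∈ Set.Icc 0 B := fun i ω => by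
    have := hLf (X i ω) (Y i ω)
    rcases hM01 i ω with h | h <;> simp [h, this.1, this.2, this.1.trans this.2]
  have hloss : Measurable fun p : 𝒳 × ℝ => L p.2 (f p.1) :=
    hL.comp (measurable_snd.prodMk (hf.comp measurable_fst))
  set G : ℝ × 𝒳 × ℝ → ℝ := fun q => q.1 * L q.2.2 (f q.2.1) / π q.2.1
  have hG : Measurable G :=
    (measurable_fst.mul (hloss.comp measurable_snd)).div
      (hπ.comp (measurable_fst.comp measurable_snd))
  have hGint : Integrable (fun ω => G (M 0 ω, X 0 ω, Y 0 ω)) μ :=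
    .of_bound (hG.comp ((hM 0).prodMk ((hX 0).prodMk (hY 0)))).aestronglyMeasurable (B / (2 * c))
      (.of_forall fun ω => by
        rw [Real.norm_eq_abs, abs_of_nonneg (div_nonneg (hML 0 ω).1 (hπpos _).le)]
        exact div_le_div₀ ((hML 0 ω).1.trans (hML 0 ω).2) (hML 0 ω).2 h2c (hπrange _).1)
  have hmean : ∫ ω, G (M 0 ω, X 0 ω, Y 0 ω) ∂μ = ∫ ω, L (Y 0 ω) (f (X 0 ω)) ∂μ :=
    integral_mul_div_propensity_eq_of_condIndepFun (hX 0).comap_le (hM 0) (hM01 0)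
      (comap_measurable (X 0)) (hY 0) hMAR hπ (fun x => (hπpos x).ne') hπX hloss
  have hsup : ∀ n ω x, |πhat n ω x - π x| ≤ ⨆ x : 𝒳, |πhat n ω x - π x| := fun n ω =>
    le_ciSup ⟨1, Set.forall_mem_range.2 fun x => by
      obtain ⟨h₁, h₂⟩ := hπhatRange n ω x
      obtain ⟨h₃, h₄⟩ := hπrange x
      rw [abs_le]; constructor <;> linarith⟩
  have hLLN := tendstoInMeasure_inv_mul_sum_comp hIndep hIdent hG hGint
  rw [hmean] at hLLN
  refine hLLN.of_dist_le_mul (K := B / (c' * (2 * c))) hπhatConv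
    fun n ω => dist_inv_mul_sum_le fun i => ?_
  exact abs_div_sub_div_le (hML i ω) hc' h2c (hπhatRange n ω _).1 (hπrange _).1 (hsup n ω _)

/-- For i.i.d. copies `(Mᵢ, Xᵢ, Yᵢ)` of `(M, X, Y)` satisfying the MAR
assumption, with propensity score `π(X) = E[M | X]` satisfying `2c ≤ π ≤ 1`, a fixed
measurable `f` with `0 ≤ L(y, f(x)) ≤ B`, and estimated propensities
`π̂ₙ : 𝒳 → [c', 1]` with `sup_x |π̂ₙ(x) − π(x)| → 0` in probability, the weighted
empirical risk `(1/n) Σᵢ Mᵢ L(Yᵢ, f(Xᵢ)) / π̂ₙ(Xᵢ)` converges in probability to the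
risk `R_{L,P}(f) = E[L(Y, f(X))]`. -/
theorem stmt_1
    {Ω 𝒳 : Type*} [MeasurableSpace Ω] [StandardBorelSpace Ω] [MeasurableSpace 𝒳]
    (μ : Measure Ω) [IsProbabilityMeasure μ]
    (M : ℕ → Ω → ℝ) (X : ℕ → Ω → 𝒳) (Y : ℕ → Ω → ℝ)
    (hM : ∀ i, Measurable (M i)) (hX : ∀ i, Measurable (X i)) (hY : ∀ i, Measurable (Y i))
    (hM01 : ∀ i ω, M i ω = 0 ∨ M i ω = 1)
    -- the triples (Mᵢ, Xᵢ, Yᵢ) are i.i.d. copies of the base triple (M₀, X₀, Y₀)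
    (hIndep : iIndepFun (fun i ω => (M i ω, X i ω, Y i ω)) μ)
    (hIdent : ∀ i, IdentDistrib (fun ω => (M i ω, X i ω, Y i ω))
      (fun ω => (M 0 ω, X 0 ω, Y 0 ω)) μ μ)
    -- MAR: M and Y are conditionally independent given X
    (hMAR : CondIndepFun (MeasurableSpace.comap (X 0) inferInstance) (hX 0).comap_le
      (M 0) (Y 0) μ)
    -- propensity score: π(X) = P(M = 1 | X) = E[M | X], with π(x) ≥ 2c > 0
    (π : 𝒳 → ℝ) (hπ : Measurable π)
    (hπX : (fun ω => π (X 0 ω)) =ᵐ[μ] μ[M 0 | MeasurableSpace.comap (X 0) inferInstance])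
    (c : ℝ) (hc : 0 < c) (hπrange : ∀ x, π x ∈ Set.Icc (2 * c) 1)
    -- the loss and the fixed predictor, with 0 ≤ L(y, f(x)) ≤ B
    (L : ℝ → ℝ → ℝ) (hL : Measurable (Function.uncurry L))
    (f : 𝒳 → ℝ) (hf : Measurable f)
    (B : ℝ) (hLf : ∀ (x : 𝒳) (y : ℝ), L y (f x) ∈ Set.Icc 0 B)
    -- the (possibly data-dependent) propensity estimators π̂ₙ : Ω → 𝒳 → [c', 1]
    (c' : ℝ) (hc' : 0 < c')
    (πhat : ℕ → Ω → 𝒳 → ℝ)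
    (hπhatMeas : ∀ n, Measurable (fun p : Ω × 𝒳 => πhat n p.1 p.2))
    (hπhatRange : ∀ n ω x, πhat n ω x ∈ Set.Icc c' 1)
    -- uniform consistency of π̂ₙ, in probability
    (hπhatConv : TendstoInMeasure μ (fun n ω => ⨆ x : 𝒳, |πhat n ω x - π x|)
      Filter.atTop (fun _ => (0 : ℝ))) :
    TendstoInMeasure μ
      (fun (n : ℕ) ω => (n : ℝ)⁻¹ * ∑ i ∈ Finset.range n,
        M i ω * L (Y i ω) (f (X i ω)) / πhat n ω (X i ω))
      Filter.atTop
      (fun _ => ∫ ω, L (Y 0 ω) (f (X 0 ω)) ∂μ) :=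
  stmt_1_general μ M X Y hM hX hY hM01 hIndep hIdent hMAR π hπ hπX c hc hπrange L hL f hf B hLf c'
    hc' πhat hπhatRange hπhatConv
end

section
/- Let n ≥ 1, and for i = 1, …, n let m_i ∈ {0, 1}, ℓ_i ∈ [0, B], h_i ∈ [0, B], ĥ_i ∈ ℝ, π_i ∈ [2c, 1] with c > 0, and π̂_i ∈ [c_L, 1] with c_L > 0. Suppose |π̂_i − π_i| ≤ E₁ and |ĥ_i − h_i| ≤ E₂ for all i. Then | (1/n) Σ_{i=1}^n [ ( m_i ℓ_i/π_i − ((m_i − π_i)/π_i) h_i ) − ( m_i ℓ_i/π̂_i − ((m_i − π̂_i)/π̂_i) ĥ_i ) ] | ≤ (B / (c · c_L)) E₁ + (1/c_L + 1) E₂. -/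
/-- Deterministic bound for the doubly-robust nuisance-estimation
error: with `mᵢ ∈ {0,1}`, `ℓᵢ, hᵢ ∈ [0, B]`, `πᵢ ∈ [2c, 1]`, `π̂ᵢ ∈ [c_L, 1]`,
`|π̂ᵢ − πᵢ| ≤ E₁` and `|ĥᵢ − hᵢ| ≤ E₂`,
`|(1/n) Σᵢ [(mᵢℓᵢ/πᵢ − ((mᵢ−πᵢ)/πᵢ)hᵢ) − (mᵢℓᵢ/π̂ᵢ − ((mᵢ−π̂ᵢ)/π̂ᵢ)ĥᵢ)]|
  ≤ (B/(c·c_L)) E₁ + (1/c_L + 1) E₂`. -/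
theorem stmt_16 (n : ℕ) (hn : 1 ≤ n)
    (m ℓ h hhat π πhat : Fin n → ℝ) (B c cL E₁ E₂ : ℝ)
    (hc : 0 < c) (hcL : 0 < cL)
    (hm : ∀ i, m i = 0 ∨ m i = 1)
    (hℓ : ∀ i, ℓ i ∈ Set.Icc 0 B)
    (hh : ∀ i, h i ∈ Set.Icc 0 B)
    (hπ : ∀ i, π i ∈ Set.Icc (2 * c) 1)
    (hπhat : ∀ i, πhat i ∈ Set.Icc cL 1)
    (hE₁ : ∀ i, |πhat i - π i| ≤ E₁)
    (hE₂ : ∀ i, |hhat i - h i| ≤ E₂) :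
    |(n : ℝ)⁻¹ * ∑ i, ((m i * ℓ i / π i - (m i - π i) / π i * h i)
        - (m i * ℓ i / πhat i - (m i - πhat i) / πhat i * hhat i))|
      ≤ B / (c * cL) * E₁ + (1 / cL + 1) * E₂ := by
  have i0 : Fin n := ⟨0, hn⟩
  have hB : 0 ≤ B := le_trans (hℓ i0).1 (hℓ i0).2
  have hE1 : 0 ≤ E₁ := le_trans (abs_nonneg _) (hE₁ i0)
  have hE2 : 0 ≤ E₂ := le_trans (abs_nonneg _) (hE₂ i0)
  set K := B / (c * cL) * E₁ + (1 / cL + 1) * E₂ with hK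
  have hterm : ∀ i, |((m i * ℓ i / π i - (m i - π i) / π i * h i)
      - (m i * ℓ i / πhat i - (m i - πhat i) / πhat i * hhat i))| ≤ K := by
    intro i
    have hπpos : 0 < π i := lt_of_lt_of_le (by linarith) (hπ i).1
    have hπhpos : 0 < πhat i := lt_of_lt_of_le hcL (hπhat i).1
    have hid : (m i * ℓ i / π i - (m i - π i) / π i * h i)
        - (m i * ℓ i / πhat i - (m i - πhat i) / πhat i * hhat i)
      = m i * (ℓ i - h i) * (πhat i - π i) / (π i * πhat i)
        + m i * (hhat i - h i) / πhat i + (h i - hhat i) := by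
      field_simp
      ring
    rw [hid]
    have hm1 : |m i| ≤ 1 := by rcases hm i with h' | h' <;> simp [h']
    have hlh : |ℓ i - h i| ≤ B := by
      rcases hℓ i with ⟨a1, a2⟩; rcases hh i with ⟨b1, b2⟩
      rw [abs_le]; constructor <;> linarith
    have hA : |m i * (ℓ i - h i) * (πhat i - π i) / (π i * πhat i)|
        ≤ B / (c * cL) * E₁ := by
      rw [abs_div, abs_mul, abs_mul, abs_of_pos (by positivity : (0:ℝ) < π i * πhat i)]
      have hnum : |m i| * |ℓ i - h i| * |πhat i - π i| ≤ B * E₁ := by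
        have h1 : |m i| * |ℓ i - h i| ≤ 1 * B :=
          mul_le_mul hm1 hlh (abs_nonneg _) zero_le_one
        have := mul_le_mul h1 (hE₁ i) (abs_nonneg _) (by linarith)
        linarith
      have hden : c * cL ≤ π i * πhat i := by
        have := (hπ i).1
        have := (hπhat i).1
        nlinarith
      calc |m i| * |ℓ i - h i| * |πhat i - π i| / (π i * πhat i)
          ≤ B * E₁ / (π i * πhat i) := by
            apply div_le_div_of_nonneg_right hnum (by positivity)
        _ ≤ B * E₁ / (c * cL) := by
            apply div_le_div_of_nonneg_left (by positivity) (by positivity) hden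
        _ = B / (c * cL) * E₁ := by ring
    have hBd : |m i * (hhat i - h i) / πhat i| ≤ 1 / cL * E₂ := by
      rw [abs_div, abs_mul, abs_of_pos hπhpos]
      have hnum : |m i| * |hhat i - h i| ≤ 1 * E₂ :=
        mul_le_mul hm1 (hE₂ i) (abs_nonneg _) zero_le_one
      calc |m i| * |hhat i - h i| / πhat i ≤ 1 * E₂ / πhat i := by
            apply div_le_div_of_nonneg_right hnum hπhpos.le
        _ ≤ 1 * E₂ / cL := by
            apply div_le_div_of_nonneg_left (by linarith) hcL (hπhat i).1
        _ = 1 / cL * E₂ := by ring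
    have hC : |h i - hhat i| ≤ E₂ := by rw [abs_sub_comm]; exact hE₂ i
    calc |m i * (ℓ i - h i) * (πhat i - π i) / (π i * πhat i)
          + m i * (hhat i - h i) / πhat i + (h i - hhat i)|
        ≤ |m i * (ℓ i - h i) * (πhat i - π i) / (π i * πhat i)
          + m i * (hhat i - h i) / πhat i| + |h i - hhat i| := abs_add_le _ _
      _ ≤ |m i * (ℓ i - h i) * (πhat i - π i) / (π i * πhat i)|
          + |m i * (hhat i - h i) / πhat i| + |h i - hhat i| := by
            have := abs_add_le (m i * (ℓ i - h i) * (πhat i - π i) / (π i * πhat i))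
              (m i * (hhat i - h i) / πhat i)
            linarith
      _ ≤ K := by rw [hK]; linarith
  have hsum : |∑ i, ((m i * ℓ i / π i - (m i - π i) / π i * h i)
      - (m i * ℓ i / πhat i - (m i - πhat i) / πhat i * hhat i))| ≤ n * K := by
    calc |∑ i, _| ≤ ∑ i, |((m i * ℓ i / π i - (m i - π i) / π i * h i)
        - (m i * ℓ i / πhat i - (m i - πhat i) / πhat i * hhat i))| :=
          Finset.abs_sum_le_sum_abs _ _
      _ ≤ ∑ _i : Fin n, K := Finset.sum_le_sum fun i _ => hterm i
      _ = n * K := by simp [mul_comm]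
  have hnpos : (0:ℝ) < n := by exact_mod_cast hn
  rw [abs_mul, abs_of_pos (inv_pos.mpr hnpos)]
  calc (n:ℝ)⁻¹ * |∑ i, ((m i * ℓ i / π i - (m i - π i) / π i * h i)
      - (m i * ℓ i / πhat i - (m i - πhat i) / πhat i * hhat i))|
      ≤ (n:ℝ)⁻¹ * (n * K) := by
        apply mul_le_mul_of_nonneg_left hsum (by positivity)
    _ = K := by field_simp
end
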